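/- Let β = 1 - α, π₀₀ = (1-2α)/(2α³-4α²+1), r_b^s = α - αβ²(1-γ)π₀₀, and r_b^h = β(π₀₀ + (α-α²)π₀₀) + β²(1-γ)απ₀₀. Then r_b^s + r_b^h ≤ 1 for all α ∈ (0, 1/2) and γ ∈ [0, 1]. -/

import Mathlib

/-!
The terms carrying `γ` (orphaned honest blocks in a tie) cancel between the two rewards, so
`r_b^s + r_b^h = α + β (1 + α - α²) π₀₀`. Writing `D = 2α³ - 4α² + 1`, one has
`D = (1 + α - α²)(1 - 2α) + α β`, hence `1 - (r_b^s + r_b^h) = α β² / D ≥ 0`.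
-/

theorem selfish_add_honest_reward_eq (α β γ π : ℝ) :
    (α - α * β^2 * (1 - γ) * π) + (β * (π + (α - α^2) * π) + β^2 * (1 - γ) * α * π) =
      α + β * (1 + α - α^2) * π := by
  ring

theorem selfish_mining_denom_pos {α : ℝ} (h0 : 0 ≤ α) (h1 : α ≤ 1/2) :
    0 < 2*α^3 - 4*α^2 + 1 := by
  nlinarith [mul_nonneg h0 (sub_nonneg.mpr h1), mul_nonneg (mul_nonneg h0 h0) (sub_nonneg.mpr h1)]

theorem one_sub_total_reward_eq {α : ℝ} (hD : 2*α^3 - 4*α^2 + 1 ≠ 0) :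
    1 - (α + (1 - α) * (1 + α - α^2) * ((1 - 2*α) / (2*α^3 - 4*α^2 + 1))) =
      α * (1 - α)^2 / (2*α^3 - 4*α^2 + 1) := by
  rw [mul_div_assoc', eq_div_iff hD, sub_mul, add_mul, div_mul_cancel₀ _ hD]
  ring

theorem stmt_3_general (α γ : ℝ) (h0 : 0 < α) (h1 : α < 1/2)
    (β : ℝ) (hβ : β = 1 - α)
    (π00 : ℝ) (hπ : π00 = (1 - 2*α) / (2*α^3 - 4*α^2 + 1))
    (rbs : ℝ) (hs : rbs = α - α * β^2 * (1 - γ) * π00)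
    (rbh : ℝ) (hh : rbh = β * (π00 + (α - α^2) * π00) + β^2 * (1 - γ) * α * π00) :
    rbs + rbh ≤ 1 := by
  have hD := selfish_mining_denom_pos h0.le h1.le
  subst hβ hπ hs hh
  rw [selfish_add_honest_reward_eq, ← sub_nonneg, one_sub_total_reward_eq hD.ne']
  exact div_nonneg (mul_nonneg h0.le (sq_nonneg _)) hD.le

theorem stmt_3 (α γ : ℝ) (h0 : 0 < α) (h1 : α < 1/2) (hγ0 : 0 ≤ γ) (hγ1 : γ ≤ 1)
    (β : ℝ) (hβ : β = 1 - α)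
    (π00 : ℝ) (hπ : π00 = (1 - 2*α) / (2*α^3 - 4*α^2 + 1))
    (rbs : ℝ) (hs : rbs = α - α * β^2 * (1 - γ) * π00)
    (rbh : ℝ) (hh : rbh = β * (π00 + (α - α^2) * π00) + β^2 * (1 - γ) * α * π00) :
    rbs + rbh ≤ 1 :=
  stmt_3_general α γ h0 h1 β hβ π00 hπ rbs hs rbh hh
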